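/- arXiv:2212.09861 — 2 statements merged into one kernel-verified Lean document; each statement's English description precedes it below -/
import Mathlib

section
/- Let K_{m,n} be the complete bipartite graph with parts of sizes m and n, where m ≥ n ≥ k ≥ 1. Then the k-Grundy domination number satisfies γ_gr^k(K_{m,n}) = m + k − 1. -/
/-- A sequence `S` of distinct vertices is a generalized `k`-Grundy sequence with respect to
neighborhood assignments `N₁` (where the footprinted vertex must lie relative to the new
vertex) and `N₂` (the neighborhoods of earlier vertices that must contain the footprinted
vertex fewer than `k` times): for each position `i` there is a vertex `u ∈ N₁ (S i)` that
belongs to `N₂ w` for fewer than `k` of the vertices `w` preceding position `i`. -/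
def IsGrundySeq {V : Type*} (k : ℕ) (N₁ N₂ : V → Set V) (S : List V) : Prop :=
  S.Nodup ∧ ∀ (i : ℕ) (hi : i < S.length),
    ∃ u ∈ N₁ (S.get ⟨i, hi⟩), {w | w ∈ S.take i ∧ u ∈ N₂ w}.ncard < k

/-- The length of a longest generalized `k`-Grundy sequence. -/
noncomputable def grundyVal {V : Type*} (k : ℕ) (N₁ N₂ : V → Set V) : ℕ :=
  sSup {m | ∃ S : List V, IsGrundySeq k N₁ N₂ S ∧ S.length = m}

/-- The closed neighborhood `N[v]` of a vertex. -/
def closedNbhd {V : Type*} (G : SimpleGraph V) (v : V) : Set V :=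
  insert v (G.neighborSet v)

/-- The `k`-Grundy domination number `γ_gr^k(G)`. -/
noncomputable def kGrundy {V : Type*} (G : SimpleGraph V) (k : ℕ) : ℕ :=
  grundyVal k (closedNbhd G) (closedNbhd G)

/-- The `k`-`L`-Grundy domination number `γ_gr^{L,k}(G)`. -/
noncomputable def kLGrundy {V : Type*} (G : SimpleGraph V) (k : ℕ) : ℕ :=
  grundyVal k (closedNbhd G) G.neighborSet

/-- The `k`-`Z`-Grundy domination number `γ_gr^{Z,k}(G)`. -/
noncomputable def kZGrundy {V : Type*} (G : SimpleGraph V) (k : ℕ) : ℕ :=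
  grundyVal k G.neighborSet (closedNbhd G)

/-- The `k`-`t`-Grundy domination number `γ_gr^{t,k}(G)`. -/
noncomputable def ktGrundy {V : Type*} (G : SimpleGraph V) (k : ℕ) : ℕ :=
  grundyVal k G.neighborSet G.neighborSet

/-! In `K_{m,n}` with `n ≤ m`, every vertex has at most `m - 1` vertices outside its closed
neighbourhood. Hence once `m + k - 1` vertices have been played, every vertex lies in the closed
neighbourhood of at least `k` of them and the sequence cannot be continued. Conversely, play
`k - 1` vertices of the `n`-side and then the whole `m`-side: each vertex footprints itself, and
its earlier closed neighbours are among those first `k - 1` vertices. -/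

theorem List.ncard_setOf_mem_le {V : Type*} (l : List V) : {w | w ∈ l}.ncard ≤ l.length := by
  classical
  rw [← List.coe_toFinset, Set.ncard_coe_finset]
  exact l.toFinset_card_le

theorem List.Nodup.ncard_setOf_mem {V : Type*} {l : List V} (hl : l.Nodup) :
    {w | w ∈ l}.ncard = l.length := by
  classical
  rw [← List.coe_toFinset, Set.ncard_coe_finset, List.toFinset_card_of_nodup hl]

theorem List.Nodup.getElem_notMem_take {V : Type*} {l : List V} (hl : l.Nodup) {i : ℕ}
    (hi : i < l.length) : l[i] ∉ l.take i := by
  rw [List.mem_take_iff_getElem]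
  rintro ⟨j, hj, h⟩
  have := hl.getElem_inj_iff.1 h
  omega

section GrundySeq

variable {V : Type*} {k : ℕ} {N₁ N₂ : V → Set V}

theorem grundyVal_eq {L : ℕ} (hle : ∀ S, IsGrundySeq k N₁ N₂ S → S.length ≤ L)
    (hL : ∃ S, IsGrundySeq k N₁ N₂ S ∧ S.length = L) : grundyVal k N₁ N₂ = L :=
  IsGreatest.csSup_eq ⟨hL, by rintro _ ⟨S, hS, rfl⟩; exact hle S hS⟩

/-- Among the first `d + k` vertices at most `d` avoid any given `u`, so no footprint is left
for position `d + k`. -/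
theorem IsGrundySeq.length_le [Finite V] {S : List V} {d : ℕ}
    (hd : ∀ u, {w | u ∉ N₂ w}.ncard ≤ d) (hS : IsGrundySeq k N₁ N₂ S) : S.length ≤ d + k := by
  by_contra! hlt
  obtain ⟨u, -, hu⟩ := hS.2 (d + k) hlt
  set T := S.take (d + k)
  have hT : T.length = d + k := List.length_take_of_le hlt.le
  have hcover : T.length ≤ {w | w ∈ T ∧ u ∈ N₂ w}.ncard + d := calc
    T.length = {w | w ∈ T}.ncard := ((List.take_sublist _ _).nodup hS.1).ncard_setOf_mem.symm
    _ ≤ ({w | w ∈ T ∧ u ∈ N₂ w} ∪ {w | u ∉ N₂ w}).ncard :=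
      Set.ncard_le_ncard fun w hw => by by_cases h : u ∈ N₂ w <;> simp_all
    _ ≤ _ := (Set.ncard_union_le _ _).trans (by gcongr; exact hd u)
  omega

end GrundySeq

section ClosedNbhd

variable {V : Type*} (G : SimpleGraph V)

theorem mem_closedNbhd_comm {u w : V} : u ∈ closedNbhd G w ↔ w ∈ closedNbhd G u := by
  simp [closedNbhd, eq_comm, G.adj_comm]

theorem IsGrundySeq.length_le_of_ncard_compl_closedNbhd_le [Finite V] {k d : ℕ} {S : List V}
    (hd : ∀ u, (closedNbhd G u)ᶜ.ncard ≤ d)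
    (hS : IsGrundySeq k (closedNbhd G) (closedNbhd G) S) : S.length ≤ d + k :=
  hS.length_le fun u => by
    have : {w | u ∉ closedNbhd G w} = (closedNbhd G u)ᶜ :=
      Set.ext fun _ => (mem_closedNbhd_comm G).not
    exact this ▸ hd u

/-- Each vertex is its own footprint: its earlier closed neighbours all lie in `A`. -/
theorem isGrundySeq_append_of_isIndepSet {k : ℕ} {A B : List V} (hAB : (A ++ B).Nodup)
    (hA : A.length < k) (hB : G.IsIndepSet {w | w ∈ B}) :
    IsGrundySeq k (closedNbhd G) (closedNbhd G) (A ++ B) := by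
  refine ⟨hAB, fun i hi => ⟨_, Set.mem_insert _ _, ?_⟩⟩
  have hearlier : {w | w ∈ (A ++ B).take i ∧ (A ++ B).get ⟨i, hi⟩ ∈ closedNbhd G w} ⊆
      {w | w ∈ A} := by
    rintro w ⟨hw, hiw⟩
    rcases List.mem_append.1 (List.take_append ▸ hw) with hwA | hwB
    · exact List.mem_of_mem_take hwA
    have hAi : A.length ≤ i := by
      by_contra! h
      simp [Nat.sub_eq_zero_of_le h.le] at hwB
    have hiB : (A ++ B)[i] ∈ B := by
      rw [List.getElem_append_right hAi]; exact List.getElem_mem _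
    have hwi : w ≠ (A ++ B)[i] := by
      rintro rfl; exact hAB.getElem_notMem_take hi hw
    rcases hiw with hiw | hadj
    · exact absurd hiw.symm hwi
    · exact absurd hadj (hB (List.mem_of_mem_take hwB) hiB hwi)
  calc _ ≤ {w | w ∈ A}.ncard := Set.ncard_le_ncard hearlier (List.finite_toSet A)
    _ ≤ A.length := A.ncard_setOf_mem_le
    _ < k := hA

end ClosedNbhd

section CompleteBipartite

variable {α β : Type*}

theorem compl_closedNbhd_completeBipartiteGraph_inl (a : α) :
    (closedNbhd (completeBipartiteGraph α β) (.inl a))ᶜ = Sum.inl '' {a}ᶜ := by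
  ext (w | w) <;> simp [closedNbhd, eq_comm]

theorem compl_closedNbhd_completeBipartiteGraph_inr (b : β) :
    (closedNbhd (completeBipartiteGraph α β) (.inr b))ᶜ = Sum.inr '' {b}ᶜ := by
  ext (w | w) <;> simp [closedNbhd, eq_comm]

theorem ncard_compl_closedNbhd_completeBipartiteGraph_le [Finite α] [Finite β]
    (hβα : Nat.card β ≤ Nat.card α) (u : α ⊕ β) :
    (closedNbhd (completeBipartiteGraph α β) u)ᶜ.ncard ≤ Nat.card α - 1 := by
  rcases u with a | b
  · rw [compl_closedNbhd_completeBipartiteGraph_inl,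
      Set.ncard_image_of_injective _ Sum.inl_injective, Set.ncard_compl, Set.ncard_singleton]
  · rw [compl_closedNbhd_completeBipartiteGraph_inr,
      Set.ncard_image_of_injective _ Sum.inr_injective, Set.ncard_compl, Set.ncard_singleton]
    omega

theorem isIndepSet_range_inl_completeBipartiteGraph :
    (completeBipartiteGraph α β).IsIndepSet (Set.range Sum.inl) := by
  rintro _ ⟨a, rfl⟩ _ ⟨a', rfl⟩ -
  simp

end CompleteBipartite

theorem isGrundySeq_completeBipartiteGraph {m n k : ℕ} (hk : 1 ≤ k) :
    IsGrundySeq k (closedNbhd (completeBipartiteGraph (Fin m) (Fin n)))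
      (closedNbhd (completeBipartiteGraph (Fin m) (Fin n)))
      (((List.finRange n).take (k - 1)).map Sum.inr ++ (List.finRange m).map Sum.inl) := by
  refine isGrundySeq_append_of_isIndepSet _ ?_ ?_ ?_
  · exact List.nodup_append.2 ⟨((List.nodup_finRange n).sublist (List.take_sublist _ _)).map
      Sum.inr_injective, (List.nodup_finRange m).map Sum.inl_injective,
      by simp [-List.map_take]⟩
  · simp only [List.length_map, List.length_take]
    omega
  · refine Set.Pairwise.mono (fun w hw => ?_) isIndepSet_range_inl_completeBipartiteGraph
    obtain ⟨a, -, rfl⟩ := List.mem_map.1 hw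
    exact ⟨a, rfl⟩

/-- For `m ≥ n ≥ k ≥ 1`, `γ_gr^k(K_{m,n}) = m + k - 1`. -/
theorem kGrundy_completeBipartiteGraph (m n k : ℕ) (hk : 1 ≤ k) (hkn : k ≤ n) (hnm : n ≤ m) :
    kGrundy (completeBipartiteGraph (Fin m) (Fin n)) k = m + k - 1 := by
  refine grundyVal_eq (fun S hS => ?_) ⟨_, isGrundySeq_completeBipartiteGraph hk, ?_⟩
  · have := hS.length_le_of_ncard_compl_closedNbhd_le _
      (ncard_compl_closedNbhd_completeBipartiteGraph_le (by simpa using hnm))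
    simp only [Nat.card_eq_fintype_card, Fintype.card_fin] at this
    omega
  · simp only [List.length_append, List.length_map, List.length_take, List.length_finRange]
    omega
end

section
/- Let K_{m,n} be the complete bipartite graph with parts of sizes m and n, where m ≥ n ≥ k ≥ 1. Then the k-L-Grundy domination number satisfies γ_gr^{L,k}(K_{m,n}) = m + k. -/
/-!
A vertex of `K_{m,n}` with `n ≤ m` has at most `m` non-neighbours, so whatever vertex `u` is
chosen as footprint, at least `k` of any `m + k` earlier entries of an L-sequence are neighbours
of `u`: no L-sequence has an entry at position `m + k`. Conversely, list all of `M` (each vertex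
footprints itself, since `M` is independent) and then `k` vertices of `N`, which all footprint
one fixed vertex of `M`.
-/

theorem List.ncard_setOf_mem_le_length {V : Type*} (T : List V) :
    {w | w ∈ T}.ncard ≤ T.length := by
  classical
  calc {w | w ∈ T}.ncard = T.toFinset.card := by rw [← Set.ncard_coe_finset]; simp
    _ ≤ T.length := T.toFinset_card_le

theorem List.Nodup.encard_setOf_mem {V : Type*} {T : List V} (h : T.Nodup) :
    {w | w ∈ T}.encard = T.length := by
  classical
  rw [← List.toFinset_card_of_nodup h, ← Set.encard_coe_eq_coe_finsetCard]
  simp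

namespace IsGrundySeq

variable {V : Type*} {k : ℕ} {N₁ N₂ : V → Set V} {S : List V}

theorem nil : IsGrundySeq k N₁ N₂ [] :=
  ⟨List.nodup_nil, fun _ hi => absurd hi (Nat.not_lt_zero _)⟩

theorem append_singleton (hS : IsGrundySeq k N₁ N₂ S) {v u : V} (hv : v ∉ S) (hu : u ∈ N₁ v)
    (hcount : {w | w ∈ S ∧ u ∈ N₂ w}.ncard < k) : IsGrundySeq k N₁ N₂ (S ++ [v]) := by
  refine ⟨List.nodup_append.2 ⟨hS.1, List.nodup_singleton v,
    by simpa using fun w hw => ne_of_mem_of_not_mem hw hv⟩, fun i hi => ?_⟩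
  rw [List.length_append, List.length_singleton] at hi
  rcases Nat.lt_succ_iff_lt_or_eq.1 hi with hi | rfl
  · obtain ⟨u', hu', hc⟩ := hS.2 i hi
    refine ⟨u', by simpa [List.getElem_append_left hi] using hu', ?_⟩
    rwa [List.take_append_of_le_length hi.le]
  · exact ⟨u, by simpa using hu, by simpa using hcount⟩

theorem of_pairwise (hk : 0 < k) (hS : S.Nodup) (hN₁ : ∀ v ∈ S, v ∈ N₁ v)
    (hpair : S.Pairwise fun w v => v ∉ N₂ w) : IsGrundySeq k N₁ N₂ S := by
  induction S using List.reverseRecOn with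
  | nil => exact nil
  | append_singleton S v ih =>
    obtain ⟨hSnd, -, hvS⟩ := List.nodup_append.1 hS
    obtain ⟨hSpair, -, hvpair⟩ := List.pairwise_append.1 hpair
    refine (ih hSnd (fun w hw => hN₁ w (by simp [hw])) hSpair).append_singleton
      (fun hv => hvS v hv v (by simp) rfl) (hN₁ v (by simp)) ?_
    have hempty : {w | w ∈ S ∧ v ∈ N₂ w} = ∅ :=
      Set.eq_empty_of_forall_notMem fun w hw => hvpair w hw.1 v (by simp) hw.2
    simpa [hempty] using hk

theorem append_of_common_footprint (hS : IsGrundySeq k N₁ N₂ S) {T : List V}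
    (hST : (S ++ T).Nodup) {u : V} (hu : ∀ v ∈ T, u ∈ N₁ v)
    (hcount : {w | w ∈ S ∧ u ∈ N₂ w}.ncard + T.length ≤ k) :
    IsGrundySeq k N₁ N₂ (S ++ T) := by
  induction T using List.reverseRecOn with
  | nil => simpa using hS
  | append_singleton T v ih =>
    rw [← List.append_assoc] at hST ⊢
    obtain ⟨hSTnd, -, hv⟩ := List.nodup_append.1 hST
    refine (ih hSTnd (fun w hw => hu w (by simp [hw])) (by simp at hcount; omega))
      |>.append_singleton (fun h => hv v h v (by simp) rfl) (hu v (by simp)) ?_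
    have hsub : {w | w ∈ S ++ T ∧ u ∈ N₂ w} ⊆ {w | w ∈ S ∧ u ∈ N₂ w} ∪ {w | w ∈ T} := by
      rintro w ⟨hw, hwu⟩
      rcases List.mem_append.1 hw with hw | hw
      exacts [Or.inl ⟨hw, hwu⟩, Or.inr hw]
    calc {w | w ∈ S ++ T ∧ u ∈ N₂ w}.ncard
        ≤ ({w | w ∈ S ∧ u ∈ N₂ w} ∪ {w | w ∈ T}).ncard :=
          Set.ncard_le_ncard hsub ((S.finite_toSet.union T.finite_toSet).subset
            (Set.union_subset_union_left _ fun w hw => hw.1))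
      _ ≤ {w | w ∈ S ∧ u ∈ N₂ w}.ncard + {w | w ∈ T}.ncard := Set.ncard_union_le _ _
      _ ≤ {w | w ∈ S ∧ u ∈ N₂ w}.ncard + T.length := by
          grw [T.ncard_setOf_mem_le_length]
      _ < k := by simp at hcount; omega

-- `encard`, not `ncard`: the junk value `ncard = 0` of an infinite set would make `hd` vacuous.
theorem length_le_of_forall_encard_le (hS : IsGrundySeq k N₁ N₂ S) {d : ℕ}
    (hd : ∀ u, {w | u ∉ N₂ w}.encard ≤ d) : S.length ≤ d + k := by
  by_contra! h
  obtain ⟨u, -, hu⟩ := hS.2 (d + k) h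
  set P := S.take (d + k)
  have hP : {w | w ∈ P}.encard = d + k := by
    rw [(hS.1.sublist (List.take_sublist _ _)).encard_setOf_mem]
    simp only [List.length_take]
    norm_cast
    omega
  have hsub : {w | w ∈ P} ⊆ {w | w ∈ P ∧ u ∈ N₂ w} ∪ {w | u ∉ N₂ w} :=
    fun w hw => (em (u ∈ N₂ w)).imp (⟨hw, ·⟩) id
  have hcover := (Set.encard_le_encard hsub).trans (Set.encard_union_le _ _)
  rw [hP, ← (P.finite_toSet.subset fun w hw => hw.1).cast_ncard_eq] at hcover
  have := hcover.trans (add_le_add_right (hd u) _)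
  norm_cast at this
  omega

end IsGrundySeq

theorem grundyVal_eq_of_forall_length_le {V : Type*} {k : ℕ} {N₁ N₂ : V → Set V} {S : List V}
    (hS : IsGrundySeq k N₁ N₂ S) (hmax : ∀ T, IsGrundySeq k N₁ N₂ T → T.length ≤ S.length) :
    grundyVal k N₁ N₂ = S.length := by
  refine le_antisymm (csSup_le ⟨_, S, hS, rfl⟩ ?_) (le_csSup ⟨S.length, ?_⟩ ⟨S, hS, rfl⟩) <;>
    rintro _ ⟨T, hT, rfl⟩ <;> exact hmax T hT

namespace SimpleGraph

variable {α β : Type*}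

theorem completeBipartiteGraph_encard_setOf_not_adj_le (u : α ⊕ β) :
    {w | ¬(completeBipartiteGraph α β).Adj w u}.encard ≤ max (ENat.card α) (ENat.card β) := by
  cases u with
  | inl a =>
    have : {w | ¬(completeBipartiteGraph α β).Adj w (.inl a)} = Set.range Sum.inl := by
      ext (w | w) <;> simp
    rw [this, ← Set.image_univ, Sum.inl_injective.encard_image, Set.encard_univ]
    exact le_max_left _ _
  | inr b =>
    have : {w | ¬(completeBipartiteGraph α β).Adj w (.inr b)} = Set.range Sum.inr := by
      ext (w | w) <;> simp
    rw [this, ← Set.image_univ, Sum.inr_injective.encard_image, Set.encard_univ]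
    exact le_max_right _ _

theorem exists_isGrundySeq_completeBipartiteGraph [Fintype α] [Fintype β] [Nonempty α] {k : ℕ}
    (hk : 0 < k) (hkβ : k ≤ Fintype.card β) :
    ∃ S, IsGrundySeq k (closedNbhd (completeBipartiteGraph α β))
      (completeBipartiteGraph α β).neighborSet S ∧ S.length = Fintype.card α + k := by
  set A : List (α ⊕ β) := Finset.univ.toList.map .inl
  set B : List (α ⊕ β) := (Finset.univ.toList.take k).map .inr
  have hA : IsGrundySeq k (closedNbhd (completeBipartiteGraph α β))
      (completeBipartiteGraph α β).neighborSet A := by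
    refine .of_pairwise hk ((Finset.nodup_toList _).map Sum.inl_injective)
      (fun v _ => Set.mem_insert v _) ?_
    simpa [A, List.pairwise_map] using List.pairwise_of_forall_sublist fun _ => trivial
  obtain ⟨a⟩ := ‹Nonempty α›
  refine ⟨A ++ B, hA.append_of_common_footprint (u := .inl a) ?_ ?_ ?_, by simp [A, B, hkβ]⟩
  · refine List.nodup_append.2 ⟨?_, ?_, ?_⟩
    · exact (Finset.nodup_toList _).map Sum.inl_injective
    · exact ((Finset.nodup_toList _).sublist (List.take_sublist _ _)).map Sum.inr_injective
    · rintro _ hwA _ hwB rfl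
      obtain ⟨x, -, rfl⟩ := List.mem_map.1 hwA
      obtain ⟨y, -, hy⟩ := List.mem_map.1 hwB
      exact Sum.inr_ne_inl hy
  · intro v hv
    obtain ⟨y, -, rfl⟩ := List.mem_map.1 hv
    exact Set.mem_insert_of_mem _ (by simp)
  · have hempty : {w | w ∈ A ∧ .inl a ∈ (completeBipartiteGraph α β).neighborSet w} = ∅ := by
      refine Set.eq_empty_of_forall_notMem fun w ⟨hw, hadj⟩ => ?_
      obtain ⟨x, -, rfl⟩ := List.mem_map.1 hw
      simp at hadj
    rw [hempty, Set.ncard_empty, zero_add]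
    simp [B, hkβ]

theorem kLGrundy_completeBipartiteGraph_eq [Fintype α] [Fintype β] {k : ℕ} (hk : 0 < k)
    (hkβ : k ≤ Fintype.card β) (hβα : Fintype.card β ≤ Fintype.card α) :
    kLGrundy (completeBipartiteGraph α β) k = Fintype.card α + k := by
  have : Nonempty α := Fintype.card_pos_iff.1 (hk.trans_le (hkβ.trans hβα))
  obtain ⟨S, hS, hlen⟩ := exists_isGrundySeq_completeBipartiteGraph (α := α) hk hkβ
  rw [kLGrundy, ← hlen]
  refine grundyVal_eq_of_forall_length_le hS fun T hT =>
    hlen ▸ hT.length_le_of_forall_encard_le fun u => ?_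
  simpa [ENat.card_eq_coe_fintype_card, hβα] using completeBipartiteGraph_encard_setOf_not_adj_le u

end SimpleGraph

/-- For `m ≥ n ≥ k ≥ 1`, `γ_gr^{L,k}(K_{m,n}) = m + k`. -/
theorem kLGrundy_completeBipartiteGraph (m n k : ℕ) (hk : 1 ≤ k) (hkn : k ≤ n) (hnm : n ≤ m) :
    kLGrundy (completeBipartiteGraph (Fin m) (Fin n)) k = m + k := by
  simpa using SimpleGraph.kLGrundy_completeBipartiteGraph_eq (α := Fin m) hk (by simpa) (by simpa)
end
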